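/- If T is a Dunford-Schwartz operator on ℓ∞ and x ∈ c₀, then there exists x̂ ∈ c₀ such that ‖(1/n) Σ_{k=0}^{n−1} T^k(x) − x̂‖_∞ → 0 as n → ∞. -/

import Mathlib

open Filter Finset Topology

/-- The supremum norm of a real sequence. -/
noncomputable def supNorm (x : ℕ → ℝ) : ℝ := ⨆ n, |x n|

/-- `x` is a bounded sequence (i.e. `x ∈ ℓ∞`). -/
def IsBdd (x : ℕ → ℝ) : Prop := ∃ C, ∀ n, |x n| ≤ C

/-- The non-increasing rearrangement of a bounded sequence, `0`-indexed:
`(x*)_n = inf over finite F with card F ≤ n of sup_{k ∉ F} |x k|`. -/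
noncomputable def rearr (x : ℕ → ℝ) (n : ℕ) : ℝ :=
  sInf { r : ℝ | ∃ F : Finset ℕ, F.card ≤ n ∧ r = ⨆ k : {k : ℕ // k ∉ F}, |x k.1| }

/-- A Dunford–Schwartz operator: a linear operator which is an `ℓ₁`-contraction
and an `ℓ∞`-contraction. -/
def IsDS (T : (ℕ → ℝ) →ₗ[ℝ] (ℕ → ℝ)) : Prop :=
  (∀ x : ℕ → ℝ, Summable (fun n => |x n|) →
      Summable (fun n => |T x n|) ∧ ∑' n, |T x n| ≤ ∑' n, |x n|) ∧
  (∀ x : ℕ → ℝ, IsBdd x → IsBdd (T x) ∧ supNorm (T x) ≤ supNorm x)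

/-- The Cesàro average `A(n,T)(x) = (1/n) ∑_{k=0}^{n-1} T^k x`. -/
noncomputable def cesaro (T : (ℕ → ℝ) →ₗ[ℝ] (ℕ → ℝ)) (n : ℕ) (x : ℕ → ℝ) : ℕ → ℝ :=
  fun s => (∑ k ∈ Finset.range n, (⇑T)^[k] x s) / n

/-!
On `c₀` the operator `T` restricts to a contraction `T₀`: finitely supported vectors go to `ℓ¹`,
and `T` is an `ℓ∞`-contraction. Cesàro averages of a contraction converge on the closure of
`ker (T₀ - 1) + range (T₀ - 1)`, so it suffices that this subspace is dense. If it is not,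
Hahn–Banach gives a nonzero `T₀`-invariant functional `Λ = ⟨·, φ⟩`, `φ ∈ ℓ¹`, killing all fixed
points. Let `M` be the finite set where `|φ|` attains its maximum `β`. For `z = φ ⬝ 1_M`, the two
contraction properties of `T` and `⟨T z, φ⟩ = ⟨z, φ⟩ = #M β²` force `T z = z`, while `Λ z ≠ 0`.
-/

open scoped ZeroAtInfty

theorem Submodule.dense_of_forall_strongDual_eq_zero {E : Type*} [TopologicalSpace E]
    [AddCommGroup E] [IsTopologicalAddGroup E] [Module ℝ E] [ContinuousSMul ℝ E]
    [LocallyConvexSpace ℝ E] (V : Submodule ℝ E)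
    (h : ∀ Λ : StrongDual ℝ E, (∀ v ∈ V, Λ v = 0) → Λ = 0) : Dense (V : Set E) := by
  refine dense_iff_closure_eq.2 (Set.eq_univ_of_forall fun x => ?_)
  by_contra hx
  obtain ⟨Λ, u, hlt, hux⟩ :=
    geometric_hahn_banach_closed_point V.convex.closure isClosed_closure hx
  have hu : 0 < u := by simpa using hlt 0 (subset_closure V.zero_mem)
  have hΛ : ∀ v ∈ V, Λ v = 0 := by
    intro v hv
    by_contra hne
    have := hlt ((u / Λ v) • v) (subset_closure (V.smul_mem _ hv))
    rw [map_smul, smul_eq_mul, div_mul_cancel₀ _ hne] at this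
    exact this.false
  have : u < 0 := by simpa [h Λ hΛ] using hux
  linarith

section MeanErgodic

variable {𝕜 E : Type*} [RCLike 𝕜] [NormedAddCommGroup E] [NormedSpace 𝕜 E]

theorem dist_birkhoffAverage_le {f : E → E} (hf : LipschitzWith 1 f) (n : ℕ) (x y : E) :
    dist (birkhoffAverage 𝕜 f id n x) (birkhoffAverage 𝕜 f id n y) ≤ dist x y := by
  calc dist (birkhoffAverage 𝕜 f id n x) (birkhoffAverage 𝕜 f id n y)
      ≤ (∑ k ∈ range n, dist (f^[k] x) (f^[k] y)) / n :=
        dist_birkhoffAverage_birkhoffAverage_le ..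
    _ ≤ (∑ _k ∈ range n, dist x y) / n := by
        gcongr
        simpa using (hf.iterate _).dist_le_mul x y
    _ ≤ dist x y := by
        rcases eq_or_ne n 0 with rfl | hn
        · simp
        · simp [hn]

theorem isClosed_setOf_cauchySeq_birkhoffAverage {f : E → E} (hf : LipschitzWith 1 f) :
    IsClosed {x | CauchySeq (birkhoffAverage 𝕜 f id · x)} := by
  refine isClosed_of_closure_subset fun x hx => Metric.cauchySeq_iff'.2 fun ε hε => ?_
  obtain ⟨y, hy, hxy⟩ := Metric.mem_closure_iff.1 hx (ε / 3) (by positivity)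
  obtain ⟨N, hN⟩ := Metric.cauchySeq_iff'.1 hy (ε / 3) (by positivity)
  refine ⟨N, fun n hn => ?_⟩
  calc dist (birkhoffAverage 𝕜 f id n x) (birkhoffAverage 𝕜 f id N x)
      ≤ dist (birkhoffAverage 𝕜 f id n x) (birkhoffAverage 𝕜 f id n y)
        + dist (birkhoffAverage 𝕜 f id n y) (birkhoffAverage 𝕜 f id N y)
        + dist (birkhoffAverage 𝕜 f id N y) (birkhoffAverage 𝕜 f id N x) := dist_triangle4 ..
    _ < ε / 3 + ε / 3 + ε / 3 := by
        gcongr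
        · exact (dist_birkhoffAverage_le hf n x y).trans_lt hxy
        · exact hN n hn
        · exact (dist_birkhoffAverage_le hf N y x).trans_lt (dist_comm x y ▸ hxy)
    _ = ε := by ring

theorem LinearMap.birkhoffAverage_add (f : E →ₗ[𝕜] E) (n : ℕ) (x y : E) :
    birkhoffAverage 𝕜 f _root_.id n (x + y) =
      birkhoffAverage 𝕜 f _root_.id n x + birkhoffAverage 𝕜 f _root_.id n y := by
  simp [birkhoffAverage, birkhoffSum, iterate_map_add, sum_add_distrib, smul_add]

theorem LinearMap.birkhoffAverage_sub (f : E →ₗ[𝕜] E) (n : ℕ) (x y : E) :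
    birkhoffAverage 𝕜 f _root_.id n (x - y) =
      birkhoffAverage 𝕜 f _root_.id n x - birkhoffAverage 𝕜 f _root_.id n y := by
  simp [birkhoffAverage, birkhoffSum, iterate_map_sub, sum_sub_distrib, smul_sub]

theorem LinearMap.tendsto_birkhoffAverage_apply_sub_self (f : E →ₗ[𝕜] E) (hf : LipschitzWith 1 f)
    (x : E) :
    Tendsto (birkhoffAverage 𝕜 f _root_.id · (f x - x)) atTop (𝓝 0) := by
  have hbdd : Bornology.IsBounded (Set.range (_root_.id <| f^[·] x)) :=
    isBounded_iff_forall_norm_le.2 ⟨‖x‖, Set.forall_mem_range.2 fun n => by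
      simpa [iterate_map_zero] using (hf.iterate n).dist_le_mul x 0⟩
  have := tendsto_birkhoffAverage_apply_sub_birkhoffAverage 𝕜 hbdd
  simpa only [birkhoffAverage_sub] using this

theorem LinearMap.cauchySeq_birkhoffAverage_of_mem_closure (f : E →ₗ[𝕜] E)
    (hf : LipschitzWith 1 f) {x : E}
    (hx : x ∈ closure (eqLocus f 1 ⊔ range (f - 1) : Submodule 𝕜 E)) :
    CauchySeq (birkhoffAverage 𝕜 f _root_.id · x) := by
  refine (isClosed_setOf_cauchySeq_birkhoffAverage hf).closure_subset_iff.2 (fun v hv => ?_) hx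
  obtain ⟨y, hy, _, ⟨z, rfl⟩, rfl⟩ := Submodule.mem_sup.1 hv
  have hfix : Function.IsFixedPt f y := hy
  have hlim := (hfix.tendsto_birkhoffAverage 𝕜 _root_.id).add
    (tendsto_birkhoffAverage_apply_sub_self f hf z)
  simp only [sub_apply, ← birkhoffAverage_add] at hlim ⊢
  exact hlim.cauchySeq

end MeanErgodic

theorem abs_le_supNorm {x : ℕ → ℝ} (hx : IsBdd x) (s : ℕ) : |x s| ≤ supNorm x :=
  le_ciSup (f := fun n => |x n|) (hx.imp fun _ hC => Set.forall_mem_range.2 hC) s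

theorem supNorm_le {x : ℕ → ℝ} {C : ℝ} (hC : 0 ≤ C) (h : ∀ s, |x s| ≤ C) : supNorm x ≤ C :=
  Real.iSup_le h hC

theorem supNorm_coe (f : C₀(ℕ, ℝ)) : supNorm f = ‖f‖ := by
  rw [← ZeroAtInftyContinuousMap.norm_toBCF_eq_norm, BoundedContinuousFunction.norm_eq_iSup_norm]
  rfl

namespace ZeroAtInftyContinuousMap

section Normed

variable {α β : Type*} [TopologicalSpace α] [NormedAddCommGroup β]

theorem norm_apply_le (f : C₀(α, β)) (x : α) : ‖f x‖ ≤ ‖f‖ :=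
  norm_toBCF_eq_norm (f := f) ▸ f.toBCF.norm_coe_le_norm x

theorem norm_le {f : C₀(α, β)} {C : ℝ} (hC : 0 ≤ C) : ‖f‖ ≤ C ↔ ∀ x, ‖f x‖ ≤ C :=
  norm_toBCF_eq_norm (f := f) ▸ f.toBCF.norm_le hC

theorem finsetSum_apply {ι : Type*} (s : Finset ι) (g : ι → C₀(α, β)) (x : α) :
    (∑ i ∈ s, g i) x = ∑ i ∈ s, g i x :=
  map_sum (⟨⟨fun f : C₀(α, β) => f x, rfl⟩, fun _ _ => rfl⟩ : C₀(α, β) →+ β) g s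

end Normed

def ofTendsto (f : ℕ → ℝ) (hf : Tendsto f atTop (𝓝 0)) : C₀(ℕ, ℝ) :=
  ⟨⟨f, continuous_of_discreteTopology⟩, by rwa [cocompact_eq_atTop]⟩

@[simp]
theorem coe_ofTendsto (f : ℕ → ℝ) (hf : Tendsto f atTop (𝓝 0)) : ⇑(ofTendsto f hf) = f := rfl

theorem tendsto_atTop (f : C₀(ℕ, ℝ)) : Tendsto f atTop (𝓝 0) :=
  cocompact_eq_atTop (α := ℕ) ▸ zero_at_infty f

def single (t : ℕ) : C₀(ℕ, ℝ) :=
  ofTendsto (Pi.single t 1) <| tendsto_const_nhds.congr' <|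
    (eventually_ne_atTop t).mono fun _ hs => by simp [hs]

theorem sum_smul_single_apply (F : Finset ℕ) (c : ℕ → ℝ) (s : ℕ) :
    (∑ t ∈ F, c t • single t) s = if s ∈ F then c s else 0 := by
  simp [finsetSum_apply, single, Pi.single_apply]

theorem tendsto_sum_range_smul_single (f : C₀(ℕ, ℝ)) :
    Tendsto (fun N => ∑ t ∈ range N, f t • single t) atTop (𝓝 f) := by
  refine Metric.tendsto_atTop.2 fun ε hε => ?_
  obtain ⟨N, hN⟩ := Metric.tendsto_atTop.1 f.tendsto_atTop (ε / 2) (by positivity)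
  refine ⟨N, fun n hn => (dist_eq_norm _ f).trans_lt ?_⟩
  refine lt_of_le_of_lt ((norm_le (by positivity)).2 fun s => ?_) (half_lt_self hε)
  rw [sub_apply, sum_smul_single_apply]
  split_ifs with hs
  · simpa using (half_pos hε).le
  · simpa [Real.dist_eq] using (hN s (hn.trans (not_lt.1 (mem_range.not.1 hs)))).le

variable (Λ : StrongDual ℝ C₀(ℕ, ℝ))

theorem sum_abs_apply_single_le (F : Finset ℕ) : ∑ t ∈ F, |Λ (single t)| ≤ ‖Λ‖ := by
  set v := ∑ t ∈ F, (SignType.sign (Λ (single t)) : ℝ) • single t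
  have hv : ‖v‖ ≤ 1 := by
    refine (norm_le zero_le_one).2 fun s => ?_
    rw [sum_smul_single_apply]
    split_ifs
    · rcases lt_trichotomy (Λ (single s)) 0 with h | h | h <;> simp [h]
    · simp
  calc ∑ t ∈ F, |Λ (single t)| = Λ v := by simp [v, map_sum, sign_mul_self]
    _ ≤ ‖Λ‖ * ‖v‖ := (le_abs_self _).trans (Λ.le_opNorm v)
    _ ≤ ‖Λ‖ := mul_le_of_le_one_right (norm_nonneg Λ) hv

theorem summable_abs_apply_single : Summable fun t => |Λ (single t)| :=
  summable_of_sum_le (fun _ => abs_nonneg _) (sum_abs_apply_single_le Λ)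

theorem hasSum_mul_apply_single (f : C₀(ℕ, ℝ)) :
    HasSum (fun t => f t * Λ (single t)) (Λ f) := by
  have hsum : Summable fun t => ‖f t * Λ (single t)‖ := by
    refine ((summable_abs_apply_single Λ).mul_left ‖f‖).of_nonneg_of_le (fun _ => norm_nonneg _)
      fun t => ?_
    rw [norm_mul, Real.norm_eq_abs (Λ _)]
    exact mul_le_mul_of_nonneg_right (norm_apply_le f t) (abs_nonneg _)
  rw [hasSum_iff_tendsto_nat_of_summable_norm hsum]
  simpa [Function.comp_def, map_sum] using
    (Λ.continuous.tendsto f).comp (tendsto_sum_range_smul_single f)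

end ZeroAtInftyContinuousMap

theorem exists_finset_abs_eq_max {α : Type*} {φ : α → ℝ} (hφ : Tendsto φ cofinite (𝓝 0))
    (hne : φ ≠ 0) :
    ∃ β > 0, ∃ M : Finset α, M.Nonempty ∧ (∀ t, |φ t| ≤ β) ∧ ∀ t, t ∈ M ↔ |φ t| = β := by
  obtain ⟨t₁, ht₁⟩ := Function.ne_iff.1 hne
  have hfin : {t | |φ t₁| ≤ |φ t|}.Finite := by
    have := hφ.abs.eventually (gt_mem_nhds (abs_zero (α := ℝ) ▸ abs_pos.2 ht₁))
    simpa using Filter.eventually_cofinite.1 this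
  obtain ⟨t₀, ht₀, hmax⟩ := hfin.toFinset.exists_max_image (|φ ·|)
    ⟨t₁, hfin.mem_toFinset.2 (le_refl |φ t₁|)⟩
  have hle : ∀ t, |φ t| ≤ |φ t₀| := fun t => by
    by_cases ht : |φ t₁| ≤ |φ t|
    · exact hmax t (hfin.mem_toFinset.2 ht)
    · exact (not_le.1 ht).le.trans (hmax t₁ (hfin.mem_toFinset.2 (le_refl |φ t₁|)))
  have hfin₀ : {t | |φ t| = |φ t₀|}.Finite :=
    hfin.subset fun t ht => (hle t₁).trans_eq ht.symm
  exact ⟨|φ t₀|, (abs_pos.2 ht₁).trans_le (hle t₁), hfin₀.toFinset,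
    ⟨t₀, hfin₀.mem_toFinset.2 rfl⟩, hle, fun t => hfin₀.mem_toFinset⟩

/-- Equality case of `∑ y φ ≤ β ‖y‖₁ ≤ #M β²`. -/
theorem eq_ite_of_tsum_mul_eq {α : Type*} [DecidableEq α] {φ y : α → ℝ} {β : ℝ} {M : Finset α}
    (hφ : ∀ t, |φ t| ≤ β) (hM : ∀ t, t ∈ M ↔ |φ t| = β) (hy : ∀ t, |y t| ≤ β)
    (hy₁ : Summable fun t => |y t|) (hy₁M : ∑' t, |y t| ≤ #M * β)
    (hyφ : ∑' t, y t * φ t = #M * β ^ 2) (s : α) : y s = if s ∈ M then φ s else 0 := by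
  have hβ : 0 ≤ β := (abs_nonneg _).trans (hy s)
  have hmul_le (t) : y t * φ t ≤ β * |y t| := by
    nlinarith [le_abs_self (y t * φ t), abs_mul (y t) (φ t), abs_nonneg (y t), hφ t]
  have hsum : Summable fun t => y t * φ t :=
    (hy₁.mul_left β).of_norm_bounded fun t => by
      rw [Real.norm_eq_abs, abs_mul, mul_comm β]
      exact mul_le_mul_of_nonneg_left (hφ t) (abs_nonneg _)
  have hdef : ∀ t, y t * φ t = β * |y t| := by
    have hnn : ∀ t, 0 ≤ β * |y t| - y t * φ t := fun t => sub_nonneg.2 (hmul_le t)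
    have hd : Summable fun t => β * |y t| - y t * φ t := (hy₁.mul_left β).sub hsum
    have hzero : ∑' t, (β * |y t| - y t * φ t) = 0 := by
      refine le_antisymm ?_ (tsum_nonneg hnn)
      rw [(hy₁.mul_left β).tsum_sub hsum, tsum_mul_left, hyφ]
      nlinarith
    intro t
    have := (hasSum_zero_iff_of_nonneg hnn).1 (hzero ▸ hd.hasSum)
    exact (sub_eq_zero.1 (congrFun this t)).symm
  have hoff : ∀ t ∉ M, y t = 0 := fun t ht => by
    have hlt : |φ t| < β := (hφ t).lt_of_ne (mt (hM t).2 ht)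
    have : (β - |φ t|) * |y t| ≤ 0 := by
      nlinarith [hdef t, le_abs_self (y t * φ t), abs_mul (y t) (φ t)]
    exact abs_nonpos_iff.1 (nonpos_of_mul_nonpos_right this (sub_pos.2 hlt))
  have hon : ∀ t ∈ M, y t * φ t = β ^ 2 := by
    refine (Finset.sum_eq_sum_iff_of_le fun t _ => ?_).1 ?_
    · nlinarith [hdef t, hy t]
    · have hfin : ∑' t, y t * φ t = ∑ t ∈ M, y t * φ t :=
        tsum_eq_sum fun t ht => by simp [hoff t ht]
      simp [← hfin, hyφ]
  split_ifs with hs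
  · have hsq : (y s - φ s) ^ 2 ≤ 0 := by
      nlinarith [hon s hs, (hM s).1 hs, sq_abs (y s), sq_abs (φ s), abs_nonneg (y s), hy s]
    exact sub_eq_zero.1 (pow_eq_zero_iff two_ne_zero |>.1 (le_antisymm hsq (sq_nonneg _)))
  · exact hoff s hs

namespace IsDS

open ZeroAtInftyContinuousMap

variable {T : (ℕ → ℝ) →ₗ[ℝ] (ℕ → ℝ)}

theorem abs_apply_le (hT : IsDS T) {x : ℕ → ℝ} (hx : IsBdd x) (s : ℕ) : |T x s| ≤ supNorm x :=
  (abs_le_supNorm (hT.2 x hx).1 s).trans (hT.2 x hx).2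

theorem tendsto_apply_zero (hT : IsDS T) {x : ℕ → ℝ} (hx : Tendsto x atTop (𝓝 0)) :
    Tendsto (T x) atTop (𝓝 0) := by
  refine Metric.tendsto_atTop.2 fun ε hε => ?_
  obtain ⟨N, hN⟩ := Metric.tendsto_atTop.1 hx (ε / 2) (by positivity)
  set head : ℕ → ℝ := fun t => if t < N then x t else 0
  have hhead : Tendsto (T head) atTop (𝓝 0) := by
    have h := (hT.1 head (summable_of_ne_finset_zero (s := range N) fun t ht => by
      simp_all [head])).1
    exact h.of_abs.tendsto_atTop_zero
  have htail : ∀ s, |T (x - head) s| ≤ ε / 2 := by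
    refine fun s => (hT.abs_apply_le ⟨ε / 2, fun t => ?_⟩ s).trans
      (supNorm_le (by positivity) fun t => ?_) <;>
    · by_cases ht : t < N
      · simpa [head, ht] using (half_pos hε).le
      · simpa [head, ht, Real.dist_eq] using (hN t (not_lt.1 ht)).le
  obtain ⟨N', hN'⟩ := Metric.tendsto_atTop.1 hhead (ε / 2) (by positivity)
  refine ⟨N', fun s hs => ?_⟩
  have hhead_s := hN' s hs
  rw [Real.dist_eq, sub_zero] at hhead_s ⊢
  calc |T x s| = |T (x - head) s + T head s| := by simp
    _ < ε / 2 + ε / 2 :=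
      (abs_add_le _ _).trans_lt (add_lt_add_of_le_of_lt (htail s) hhead_s)
    _ = ε := add_halves ε

noncomputable def toC₀ (hT : IsDS T) : C₀(ℕ, ℝ) →ₗ[ℝ] C₀(ℕ, ℝ) where
  toFun f := ofTendsto (T f) (hT.tendsto_apply_zero f.tendsto_atTop)
  map_add' f g := by ext; simp
  map_smul' c f := by ext; simp

@[simp]
theorem coe_toC₀_apply (hT : IsDS T) (f : C₀(ℕ, ℝ)) : ⇑(hT.toC₀ f) = T f := rfl

theorem norm_toC₀_apply_le (hT : IsDS T) (f : C₀(ℕ, ℝ)) : ‖hT.toC₀ f‖ ≤ ‖f‖ := by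
  refine (norm_le (norm_nonneg f)).2 fun s => ?_
  have hf : IsBdd f := ⟨‖f‖, norm_apply_le f⟩
  simpa [supNorm_coe] using hT.abs_apply_le hf s

theorem lipschitzWith_toC₀ (hT : IsDS T) : LipschitzWith 1 hT.toC₀ :=
  LipschitzWith.of_dist_le_mul fun f g => by
    simpa [dist_eq_norm, ← map_sub] using hT.norm_toC₀_apply_le (f - g)

theorem coe_birkhoffAverage_toC₀ (hT : IsDS T) (n : ℕ) (f : C₀(ℕ, ℝ)) :
    ⇑(birkhoffAverage ℝ hT.toC₀ id n f) = cesaro T n f := by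
  have hiter (k : ℕ) : ⇑(hT.toC₀^[k] f) = T^[k] f :=
    Function.Semiconj.iterate_right (f := fun g : C₀(ℕ, ℝ) => ⇑g) (fun _ => rfl) k f
  ext s
  simp [birkhoffAverage, birkhoffSum, cesaro, finsetSum_apply, hiter, div_eq_inv_mul]

theorem exists_fixedPt_apply_ne_zero (hT : IsDS T) (Λ : StrongDual ℝ C₀(ℕ, ℝ))
    (hΛ : ∀ f, Λ (hT.toC₀ f) = Λ f) (hne : Λ ≠ 0) : ∃ z, hT.toC₀ z = z ∧ Λ z ≠ 0 := by
  set φ : ℕ → ℝ := fun t => Λ (single t)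
  have hφ : φ ≠ 0 := fun hφ => hne <| ContinuousLinearMap.ext fun f => by
    have h : HasSum (fun t => f t * φ t) (Λ f) := hasSum_mul_apply_single Λ f
    simp only [hφ, Pi.zero_apply, mul_zero] at h
    exact h.unique hasSum_zero
  obtain ⟨β, hβ, M, hMne, hφβ, hM⟩ :=
    exists_finset_abs_eq_max (summable_abs_apply_single Λ).of_abs.tendsto_cofinite_zero hφ
  set z : C₀(ℕ, ℝ) := ∑ t ∈ M, φ t • single t
  have hz (s : ℕ) : z s = if s ∈ M then φ s else 0 := sum_smul_single_apply M φ s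
  have hz₁ : Summable fun t => |z t| :=
    summable_of_ne_finset_zero (s := M) fun t ht => by simp [hz, ht]
  have hΛz : Λ z = #M * β ^ 2 := by
    have hsq (t) (ht : t ∈ M) : φ t * φ t = β ^ 2 := by rw [← (hM t).1 ht, sq_abs, sq]
    calc Λ z = ∑ t ∈ M, φ t * φ t := by simp [z, map_sum, φ]
      _ = #M * β ^ 2 := by simp [Finset.sum_congr rfl hsq]
  have hzβ : ‖z‖ ≤ β := (norm_le hβ.le).2 fun s => by
    rw [hz]
    split_ifs
    exacts [hφβ s, by simpa using hβ.le]
  have hz₁β : ∑' t, |z t| = #M * β := by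
    have hzM (t) (ht : t ∈ M) : |z t| = β := by rw [hz, if_pos ht, (hM t).1 ht]
    rw [tsum_eq_sum (s := M) fun t ht => by simp [hz, ht], Finset.sum_congr rfl hzM]
    simp
  have hzfix : hT.toC₀ z = z := by
    ext s
    refine (eq_ite_of_tsum_mul_eq hφβ hM
      (fun t => (norm_apply_le _ t).trans ((hT.norm_toC₀_apply_le z).trans hzβ))
      (hT.1 z hz₁).1 ((hT.1 z hz₁).2.trans hz₁β.le)
      ((hasSum_mul_apply_single Λ _).tsum_eq.trans ((hΛ z).trans hΛz)) s).trans (hz s).symm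
  refine ⟨z, hzfix, ?_⟩
  rw [hΛz]
  have := hMne.card_pos
  positivity

theorem dense_eqLocus_sup_range (hT : IsDS T) :
    Dense ((LinearMap.eqLocus hT.toC₀ 1 ⊔ LinearMap.range (hT.toC₀ - 1) :
      Submodule ℝ C₀(ℕ, ℝ)) : Set C₀(ℕ, ℝ)) := by
  refine Submodule.dense_of_forall_strongDual_eq_zero _ fun Λ hΛ => ?_
  by_contra hne
  have hinv (f) : Λ (hT.toC₀ f) = Λ f :=
    sub_eq_zero.1 <| by simpa using hΛ _ (Submodule.mem_sup_right ⟨f, rfl⟩)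
  obtain ⟨z, hz, hΛz⟩ := hT.exists_fixedPt_apply_ne_zero Λ hinv hne
  exact hΛz (hΛ z (Submodule.mem_sup_left hz))

end IsDS

/-- Individual ergodic theorem in `c₀`: for a Dunford–Schwartz operator `T` and
`x ∈ c₀`, the Cesàro averages converge in the supremum norm to some `x̂ ∈ c₀`. -/
theorem stmt10 (T : (ℕ → ℝ) →ₗ[ℝ] (ℕ → ℝ)) (hT : IsDS T)
    (x : ℕ → ℝ) (hx : Tendsto x atTop (nhds 0)) :
    ∃ x' : ℕ → ℝ, Tendsto x' atTop (nhds 0) ∧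
      Tendsto (fun n => supNorm (fun s => cesaro T n x s - x' s)) atTop (nhds 0) := by
  set x₀ := ZeroAtInftyContinuousMap.ofTendsto x hx
  have hcauchy := hT.toC₀.cauchySeq_birkhoffAverage_of_mem_closure (𝕜 := ℝ) hT.lipschitzWith_toC₀
    (hT.dense_eqLocus_sup_range.closure_eq ▸ Set.mem_univ x₀)
  obtain ⟨L, hL⟩ := cauchySeq_tendsto_of_complete hcauchy
  refine ⟨L, L.tendsto_atTop, ?_⟩
  have hnorm (n : ℕ) : supNorm (fun s => cesaro T n x s - L s) =
      ‖birkhoffAverage ℝ hT.toC₀ id n x₀ - L‖ := by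
    rw [← supNorm_coe, ZeroAtInftyContinuousMap.coe_sub, hT.coe_birkhoffAverage_toC₀]
    rfl
  simpa only [hnorm] using tendsto_iff_norm_sub_tendsto_zero.1 hL
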